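/- arXiv:1211.3601 — 2 statements merged into one kernel-verified Lean document; each statement's English description precedes it below -/
import Mathlib

section
/- Consider a stochastic blockmodel SBM([n],B,π): vertex class labels Y(v), v ∈ [n], are i.i.d. with P[Y(v)=k] = π_k, and conditionally on the labels the adjacency indicators A_{uv} for unordered pairs u ≠ v are independent Bernoulli(B_{Y(u),Y(v)}). Fix a distinguished vertex v*, set n_k = #{v ≠ v* : Y(v)=k} and D_k(v*) = #{v ≠ v* : Y(v)=k, A_{v v*}=1}, with the convention 0/0 = 0. Then the probability of the event that there exists k' ≠ Y(v*) with D_{k'}(v*)/n_{k'} > D_{Y(v*)}(v*)/n_{Y(v*)} (i.e., the classifier γ(v*) = argmax_k D_k(v*)/n_k misclassifies v* with no tie) equals Σ_{(n₁,…,n_K)} multinomial(n−1; n₁,…,n_K) · Π_{k=1}^K π_k^{n_k} · Σ_{k=1}^K π_k · P[ Bin(n_k, B_{kk})/n_k < max_{k'≠k} Bin(n_{k'}, B_{kk'})/n_{k'} ], where the outer sum ranges over all nonnegative integer vectors with n₁+⋯+n_K = n−1 and, inside the probability, Bin(n_k, B_{kk}), and Bin(n_{k'}, B_{kk'}) for k'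 ≠ k, denote mutually independent binomial random variables. -/
/-!
Fix the class `k` of `v*` and record, for every other vertex `v`, the cell `(class of v, v ~ v*)`;
the edges not incident to `v*` are left over. The SBM weight then factorises as `π k` times
independent per-vertex factors `π_j B_{kj}` or `π_j (1 - B_{kj})` (symmetry of `B` makes them
independent of whether `v < v*`) times the Bernoulli weights of the remaining edges, which sum
to `1`. The misclassification event depends only on the numbers of vertices in the `2K` cells, so
grouping by these counts yields a multinomial over the cells; splitting each pair of cells
`(j, true), (j, false)` turns it into the multinomial over classes times binomial probabilities.
-/

open Finset

/-- Unordered pairs of distinct vertices of `Fin n`, represented as ordered pairs `(u,v)` with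
`u < v`. -/
abbrev EPair (n : ℕ) := {e : Fin n × Fin n // e.1 < e.2}

/-- The adjacency indicator between two (distinct) vertices, read off from the indicators on
unordered pairs. -/
def adjOf {n : ℕ} (a : EPair n → Bool) (u v : Fin n) : Bool :=
  if h : u < v then a ⟨(u, v), h⟩ else if h' : v < u then a ⟨(v, u), h'⟩ else false

/-- The probability, under the stochastic blockmodel `SBM([n],B,π)`, of the configuration `c`
consisting of the vertex class labels `c.1 : Fin n → Fin K` (i.i.d. with law `π`) and the
adjacency indicators `c.2 : EPair n → Bool` (conditionally independent
`Bernoulli(B (c.1 u) (c.1 v))` given the labels). -/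
noncomputable def sbmWeight {n K : ℕ} (B : Fin K → Fin K → ℝ) (π : Fin K → ℝ)
    (c : (Fin n → Fin K) × (EPair n → Bool)) : ℝ :=
  (∏ v, π (c.1 v)) *
    ∏ e : EPair n,
      (if c.2 e then B (c.1 e.val.1) (c.1 e.val.2) else 1 - B (c.1 e.val.1) (c.1 e.val.2))

/-- `n_k`: the number of vertices other than `v*` with class label `k`. -/
def nk {n K : ℕ} (y : Fin n → Fin K) (vstar : Fin n) (k : Fin K) : ℕ :=
  (Finset.univ.filter (fun v => v ≠ vstar ∧ y v = k)).card

/-- `D_k(v*)`: the number of vertices other than `v*` with class label `k` adjacent to `v*`. -/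
def Dk {n K : ℕ} (c : (Fin n → Fin K) × (EPair n → Bool)) (vstar : Fin n) (k : Fin K) : ℕ :=
  (Finset.univ.filter (fun v => v ≠ vstar ∧ c.1 v = k ∧ adjOf c.2 v vstar = true)).card

/-- The binomial probability mass function `f_Bin(i; m, r) = C(m,i) rⁱ (1-r)^(m-i)`. -/
noncomputable def fBin (i m : ℕ) (r : ℝ) : ℝ := (m.choose i : ℝ) * r ^ i * (1 - r) ^ (m - i)

section FiberCard

variable {V β : Type*} [Fintype V] [DecidableEq β]

def fiberCard (z : V → β) (b : β) : ℕ := #{v | z v = b}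

variable [Fintype β]

theorem sum_fiberCard (z : V → β) : ∑ b, fiberCard z b = Fintype.card V :=
  (card_eq_sum_card_fiberwise fun v _ => mem_univ (z v)).symm

theorem prod_comp_eq_prod_pow_fiberCard {M : Type*} [CommMonoid M] (w : β → M) (z : V → β) :
    ∏ v, w (z v) = ∏ b, w b ^ fiberCard z b := by
  rw [← prod_fiberwise univ z]
  refine prod_congr rfl fun b _ => ?_
  rw [prod_congr rfl fun v hv => congrArg w (mem_filter.mp hv).2, prod_const]
  rfl

open MvPolynomial in
theorem card_fiberCard_eq_multinomial [DecidableEq V] (m : β → ℕ)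
    (hm : ∑ b, m b = Fintype.card V) :
    #{z : V → β | fiberCard z = m} = Nat.multinomial univ m := by
  have hpow : (∑ b, X b : MvPolynomial β ℕ) ^ Fintype.card V
      = ∑ z : V → β, ∏ b, X b ^ fiberCard z b := by
    rw [← card_univ, ← prod_const, Fintype.prod_sum]
    exact sum_congr rfl fun z _ => prod_comp_eq_prod_pow_fiberCard X z
  have hind : ∀ x : β → ℕ,
      (Finsupp.indicator univ fun b _ => m b) = Finsupp.indicator univ (fun b _ => x b) ↔ x = m :=
    fun x => ⟨fun h => funext fun b => (congrFun₂ (Finsupp.indicator_injective univ h) b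
      (mem_univ b)).symm, fun h => h ▸ rfl⟩
  have hcoeff := congrArg (coeff (Finsupp.indicator univ fun b _ => m b))
    (hpow.symm.trans (sum_pow_eq_sum_piAntidiag _ _ _))
  simp only [coeff_sum, ← C_eq_coe_nat, coeff_C_mul,
    coeff_prod_X_pow, hind, mul_ite, mul_one, mul_zero] at hcoeff
  rw [sum_ite_eq', if_pos (mem_piAntidiag.mpr ⟨hm, fun b _ => mem_univ b⟩), sum_boole] at hcoeff
  exact_mod_cast hcoeff

theorem sum_prod_mul_fiberCard [DecidableEq V] (w : β → ℝ) (F : (β → ℕ) → ℝ) :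
    ∑ z : V → β, (∏ v, w (z v)) * F (fiberCard z)
      = ∑ g ∈ piAntidiag univ (Fintype.card V),
          (Nat.multinomial univ g : ℝ) * (∏ b, w b ^ g b) * F g := by
  simp_rw [prod_comp_eq_prod_pow_fiberCard w]
  rw [← sum_fiberwise_of_maps_to (g := fiberCard) (t := piAntidiag univ (Fintype.card V))
    fun z _ => mem_piAntidiag.mpr ⟨sum_fiberCard z, fun b _ => mem_univ b⟩]
  refine sum_congr rfl fun g hg => ?_
  rw [sum_congr rfl fun z hz => by rw [(mem_filter.mp hz).2], sum_const,
    card_fiberCard_eq_multinomial g (mem_piAntidiag.mp hg).1, nsmul_eq_mul, mul_assoc]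

theorem fiberCard_true_add_false {α : Type*} [DecidableEq α] (z : V → α × Bool) (a : α) :
    fiberCard z (a, true) + fiberCard z (a, false) = #{v | (z v).1 = a} := by
  simp only [fiberCard, card_filter, ← sum_add_distrib]
  refine sum_congr rfl fun v _ => ?_
  rcases z v with ⟨b, _ | _⟩ <;> by_cases h : b = a <;> simp [h]

end FiberCard

theorem sum_prod_bernoulli {E R : Type*} [Fintype E] [DecidableEq E] [CommRing R] (p : E → R) :
    ∑ a : E → Bool, ∏ e, (if a e then p e else 1 - p e) = 1 := by
  rw [← Fintype.prod_sum fun e (b : Bool) => if b then p e else 1 - p e]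
  simp

section SplitCounts

variable {α : Type*}

def splitCounts (m d : α → ℕ) (ζ : α × Bool) : ℕ := if ζ.2 then d ζ.1 else m ζ.1 - d ζ.1

theorem splitCounts_add_true_false (g : α × Bool → ℕ) :
    splitCounts (fun a => g (a, true) + g (a, false)) (fun a => g (a, true)) = g := by
  funext ⟨a, b⟩
  cases b <;> simp [splitCounts]

variable [Fintype α]

theorem sum_splitCounts {m d : α → ℕ} (hdm : ∀ a, d a ≤ m a) :
    ∑ ζ, splitCounts m d ζ = ∑ a, m a := by
  rw [Fintype.sum_prod_type]
  exact sum_congr rfl fun a _ => by simp [splitCounts, Nat.add_sub_cancel' (hdm a)]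

theorem multinomial_splitCounts {m d : α → ℕ} (hdm : ∀ a, d a ≤ m a) :
    Nat.multinomial univ (splitCounts m d)
      = Nat.multinomial univ m * ∏ a, (m a).choose (d a) := by
  have hfac : (∏ ζ, (splitCounts m d ζ).factorial) * ∏ a, (m a).choose (d a)
      = ∏ a, (m a).factorial := by
    rw [Fintype.prod_prod_type, ← prod_mul_distrib]
    refine prod_congr rfl fun a _ => ?_
    simp only [splitCounts, Fintype.prod_bool, if_true, Bool.false_eq_true, if_false]
    rw [← Nat.choose_mul_factorial_mul_factorial (hdm a)]
    ring
  refine Nat.eq_of_mul_eq_mul_left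
    (prod_pos (s := univ) fun ζ _ => Nat.factorial_pos (splitCounts m d ζ)) ?_
  rw [Nat.multinomial_spec, sum_splitCounts hdm, ← mul_assoc, mul_right_comm, hfac,
    Nat.multinomial_spec]

def vertexWeight (π q : α → ℝ) (ζ : α × Bool) : ℝ := π ζ.1 * if ζ.2 then q ζ.1 else 1 - q ζ.1

theorem multinomial_mul_prod_vertexWeight_pow (π q : α → ℝ) {m d : α → ℕ}
    (hdm : ∀ a, d a ≤ m a) :
    (Nat.multinomial univ (splitCounts m d) : ℝ) * ∏ ζ, vertexWeight π q ζ ^ splitCounts m d ζ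
      = Nat.multinomial univ m * (∏ a, π a ^ m a) * ∏ a, fBin (d a) (m a) (q a) := by
  rw [multinomial_splitCounts hdm, Fintype.prod_prod_type]
  push_cast
  rw [mul_assoc, mul_assoc, ← prod_mul_distrib, ← prod_mul_distrib]
  congr 1
  refine prod_congr rfl fun a _ => ?_
  obtain ⟨e, he⟩ := Nat.exists_eq_add_of_le (hdm a)
  simp only [Fintype.prod_bool, vertexWeight, splitCounts, fBin, if_true, Bool.false_eq_true,
    if_false, he, Nat.add_sub_cancel_left, mul_pow, pow_add]
  ring

theorem sum_piAntidiag_prod_bool [DecidableEq α] {n N : ℕ} (hN : N < n)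
    (F : (α × Bool → ℕ) → ℝ) :
    ∑ g ∈ piAntidiag univ N, F g
      = ∑ m ∈ univ.filter (fun m : α → Fin n => ∑ a, (m a).val = N),
          ∑ d ∈ univ.filter (fun d : α → Fin n => ∀ a, (d a).val ≤ (m a).val),
            F (splitCounts (fun a => (m a).val) (fun a => (d a).val)) := by
  have hlt : ∀ g ∈ piAntidiag (univ : Finset (α × Bool)) N, ∀ a,
      g (a, true) + g (a, false) < n := by
    intro g hg a
    have hle : ∑ b, g (a, b) ≤ ∑ a, ∑ b, g (a, b) :=
      single_le_sum (f := fun a => ∑ b, g (a, b)) (fun _ _ => Nat.zero_le _) (mem_univ a)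
    rw [← Fintype.sum_prod_type, (mem_piAntidiag.mp hg).1, Fintype.sum_bool] at hle
    omega
  rw [← sum_finset_product' (univ.filter fun p : (α → Fin n) × (α → Fin n) =>
    ∑ a, (p.1 a).val = N ∧ ∀ a, (p.2 a).val ≤ (p.1 a).val) _ _ (fun p => by simp)]
  symm
  refine sum_bij' (fun p _ => splitCounts (fun a => (p.1 a).val) (fun a => (p.2 a).val))
    (fun g hg => (fun a => ⟨g (a, true) + g (a, false), hlt g hg a⟩,
      fun a => ⟨g (a, true), (Nat.le_add_right _ _).trans_lt (hlt g hg a)⟩))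
    ?_ ?_ ?_ ?_ (fun _ _ => rfl)
  · intro p hp
    obtain ⟨hm, hdm⟩ := (mem_filter.mp hp).2
    exact mem_piAntidiag.mpr ⟨(sum_splitCounts hdm).trans hm, fun ζ _ => mem_univ ζ⟩
  · intro g hg
    refine mem_filter.mpr ⟨mem_univ _, ?_, fun a => Nat.le_add_right _ _⟩
    rw [← (mem_piAntidiag.mp hg).1, Fintype.sum_prod_type]
    simp
  · intro p hp
    have hdm := (mem_filter.mp hp).2.2
    refine Prod.ext (funext fun a => Fin.ext ?_) (funext fun a => Fin.ext rfl)
    simp [splitCounts, Nat.add_sub_cancel' (hdm a)]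
  · intro g _
    exact splitCounts_add_true_false g

theorem sum_piAntidiag_vertexWeight [DecidableEq α] {n N : ℕ}
    (hN : N < n) (π q : α → ℝ) (P : (α → ℕ) → (α → ℕ) → ℝ) :
    ∑ g ∈ piAntidiag univ N,
      (Nat.multinomial univ g : ℝ) * (∏ ζ, vertexWeight π q ζ ^ g ζ) *
        P (fun j => g (j, true)) (fun j => g (j, true) + g (j, false))
      = ∑ m ∈ univ.filter (fun m : α → Fin n => ∑ j, (m j).val = N),
          (Nat.multinomial univ (fun j => (m j).val) : ℝ) * (∏ j, π j ^ (m j).val) *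
            ∑ d ∈ univ.filter (fun d : α → Fin n => ∀ j, (d j).val ≤ (m j).val),
              (∏ j, fBin (d j).val (m j).val (q j)) *
                P (fun j => (d j).val) (fun j => (m j).val) := by
  rw [sum_piAntidiag_prod_bool hN]
  refine sum_congr rfl fun m _ => ?_
  rw [mul_sum]
  refine sum_congr rfl fun d hd => ?_
  have hdm := (mem_filter.mp hd).2
  rw [multinomial_mul_prod_vertexWeight_pow π q hdm]
  simp only [splitCounts, if_true, Bool.false_eq_true, if_false, Nat.add_sub_cancel' (hdm _)]
  ring

end SplitCounts

section StarDecomposition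

variable {n : ℕ} (vstar : Fin n)

abbrev OtherVertex := {v : Fin n // v ≠ vstar}

abbrev NonincidentEdge := {e : EPair n // e.val.1 ≠ vstar ∧ e.val.2 ≠ vstar}

def starEdge (v : OtherVertex vstar) : EPair n :=
  if h : v.val < vstar then ⟨(v.val, vstar), h⟩
  else ⟨(vstar, v.val), lt_of_le_of_ne (not_lt.mp h) (Ne.symm v.prop)⟩

def classifyEdge (e : EPair n) : OtherVertex vstar ⊕ NonincidentEdge vstar :=
  if h1 : e.val.1 = vstar then Sum.inl ⟨e.val.2, ne_of_gt (h1 ▸ e.prop)⟩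
  else if h2 : e.val.2 = vstar then Sum.inl ⟨e.val.1, h1⟩
  else Sum.inr ⟨e, h1, h2⟩

variable {vstar}

theorem classifyEdge_starEdge (v : OtherVertex vstar) :
    classifyEdge vstar (starEdge vstar v) = Sum.inl v := by
  by_cases h : v.val < vstar
  · rw [starEdge, dif_pos h, classifyEdge, dif_neg (show v.val ≠ vstar from v.prop), dif_pos rfl]
  · rw [starEdge, dif_neg h, classifyEdge, dif_pos rfl]

theorem classifyEdge_nonincident (e : NonincidentEdge vstar) :
    classifyEdge vstar e.val = Sum.inr e := by
  rw [classifyEdge, dif_neg e.prop.1, dif_neg e.prop.2]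

theorem sumElim_classifyEdge (e : EPair n) :
    Sum.elim (starEdge vstar) Subtype.val (classifyEdge vstar e) = e := by
  rw [classifyEdge]
  by_cases h1 : e.val.1 = vstar
  · have h2 : ¬ e.val.2 < vstar := h1 ▸ not_lt.mpr e.prop.le
    simp only [dif_pos h1, Sum.elim_inl, starEdge, dif_neg h2]
    exact Subtype.ext (Prod.ext h1.symm rfl)
  · by_cases h2 : e.val.2 = vstar
    · have hlt : e.val.1 < vstar := h2 ▸ e.prop
      simp only [dif_neg h1, dif_pos h2, Sum.elim_inl, starEdge, dif_pos hlt]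
      exact Subtype.ext (Prod.ext rfl h2.symm)
    · simp only [dif_neg h1, dif_neg h2, Sum.elim_inr]

variable (vstar) in
def edgeEquiv : OtherVertex vstar ⊕ NonincidentEdge vstar ≃ EPair n where
  toFun := Sum.elim (starEdge vstar) Subtype.val
  invFun := classifyEdge vstar
  left_inv
    | .inl v => classifyEdge_starEdge v
    | .inr e => classifyEdge_nonincident e
  right_inv := sumElim_classifyEdge

theorem adjOf_starEdge (a : EPair n → Bool) (v : OtherVertex vstar) :
    adjOf a v.val vstar = a (starEdge vstar v) := by
  by_cases h : v.val < vstar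
  · rw [adjOf, dif_pos h, starEdge, dif_pos h]
  · have h' : vstar < v.val := lt_of_le_of_ne (not_lt.mp h) (Ne.symm v.prop)
    rw [adjOf, dif_neg h, dif_pos h', starEdge, dif_neg h]

theorem card_filter_ne_and (p : Fin n → Prop) [DecidablePred p] :
    #{v | v ≠ vstar ∧ p v} = #{v : OtherVertex vstar | p v.val} := by
  rw [← Fintype.card_subtype, ← Fintype.card_subtype]
  exact Fintype.card_congr (Equiv.subtypeSubtypeEquivSubtypeInter _ p).symm

variable {K : ℕ}

variable (vstar) in
def glueLabels (k : Fin K) (z : OtherVertex vstar → Fin K × Bool) : Fin n → Fin K :=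
  fun v => if h : v = vstar then k else (z ⟨v, h⟩).1

variable (vstar) in
def glueEdges (z : OtherVertex vstar → Fin K × Bool) (a : NonincidentEdge vstar → Bool) :
    EPair n → Bool :=
  fun e => Sum.elim (fun v => (z v).2) a (classifyEdge vstar e)

theorem glueLabels_self (k : Fin K) (z : OtherVertex vstar → Fin K × Bool) :
    glueLabels vstar k z vstar = k :=
  dif_pos rfl

theorem glueLabels_val (k : Fin K) (z : OtherVertex vstar → Fin K × Bool)
    (v : OtherVertex vstar) : glueLabels vstar k z v.val = (z v).1 :=
  dif_neg v.prop

theorem glueEdges_starEdge (z : OtherVertex vstar → Fin K × Bool)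
    (a : NonincidentEdge vstar → Bool) (v : OtherVertex vstar) :
    glueEdges vstar z a (starEdge vstar v) = (z v).2 := by
  rw [glueEdges, classifyEdge_starEdge, Sum.elim_inl]

theorem glueEdges_val (z : OtherVertex vstar → Fin K × Bool)
    (a : NonincidentEdge vstar → Bool) (e : NonincidentEdge vstar) :
    glueEdges vstar z a e.val = a e := by
  rw [glueEdges, classifyEdge_nonincident, Sum.elim_inr]

variable (vstar K) in
def starConfigEquiv :
    Fin K × (OtherVertex vstar → Fin K × Bool) × (NonincidentEdge vstar → Bool)
      ≃ (Fin n → Fin K) × (EPair n → Bool) where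
  toFun t := (glueLabels vstar t.1 t.2.1, glueEdges vstar t.2.1 t.2.2)
  invFun c := (c.1 vstar, fun v => (c.1 v.val, adjOf c.2 v.val vstar), fun e => c.2 e.val)
  left_inv := by
    rintro ⟨k, z, a⟩
    refine Prod.ext (glueLabels_self k z)
      (Prod.ext (funext fun v => ?_) (funext (glueEdges_val z a)))
    exact Prod.ext (glueLabels_val k z v) ((adjOf_starEdge _ v).trans (glueEdges_starEdge z a v))
  right_inv := by
    rintro ⟨y, a⟩
    refine Prod.ext (funext fun v => ?_) (funext fun e => ?_)
    · by_cases h : v = vstar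
      · subst h
        exact glueLabels_self _ _
      · exact glueLabels_val (vstar := vstar) _ _ ⟨v, h⟩
    · obtain ⟨x | x, rfl⟩ := (edgeEquiv vstar).surjective e
      · exact (glueEdges_starEdge _ _ x).trans (adjOf_starEdge a x)
      · exact glueEdges_val _ _ x

theorem starConfigEquiv_fst_self (k : Fin K) (z : OtherVertex vstar → Fin K × Bool)
    (a : NonincidentEdge vstar → Bool) : (starConfigEquiv vstar K (k, z, a)).1 vstar = k :=
  glueLabels_self k z

theorem Dk_starConfigEquiv (k : Fin K) (z : OtherVertex vstar → Fin K × Bool)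
    (a : NonincidentEdge vstar → Bool) :
    Dk (starConfigEquiv vstar K (k, z, a)) vstar = fun j => fiberCard z (j, true) := by
  funext j
  refine (card_filter_ne_and _).trans (congrArg card (filter_congr fun v _ => ?_))
  simp only [starConfigEquiv, Equiv.coe_fn_mk, glueLabels_val, adjOf_starEdge,
    glueEdges_starEdge, Prod.ext_iff]

theorem nk_starConfigEquiv (k : Fin K) (z : OtherVertex vstar → Fin K × Bool)
    (a : NonincidentEdge vstar → Bool) :
    nk (starConfigEquiv vstar K (k, z, a)).1 vstar
      = fun j => fiberCard z (j, true) + fiberCard z (j, false) := by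
  funext j
  rw [fiberCard_true_add_false]
  refine (card_filter_ne_and _).trans (congrArg card (filter_congr fun v _ => ?_))
  simp only [starConfigEquiv, Equiv.coe_fn_mk, glueLabels_val]

theorem prod_glueLabels {M : Type*} [CommMonoid M] (f : Fin K → M) (k : Fin K)
    (z : OtherVertex vstar → Fin K × Bool) :
    ∏ v, f (glueLabels vstar k z v) = f k * ∏ v : OtherVertex vstar, f (z v).1 := by
  simp only [Fintype.prod_eq_mul_prod_subtype_ne _ vstar, glueLabels_self, glueLabels_val]

theorem glueLabels_starEdge {X : Type*} {f : Fin K → Fin K → X} (hf : ∀ i j, f i j = f j i)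
    (k : Fin K) (z : OtherVertex vstar → Fin K × Bool) (v : OtherVertex vstar) :
    f (glueLabels vstar k z (starEdge vstar v).val.1)
        (glueLabels vstar k z (starEdge vstar v).val.2) = f k (z v).1 := by
  unfold starEdge
  split_ifs
  · exact (congrArg₂ f (glueLabels_val k z v) (glueLabels_self k z)).trans (hf _ _)
  · exact congrArg₂ f (glueLabels_self k z) (glueLabels_val k z v)

theorem sbmWeight_starConfigEquiv {B : Fin K → Fin K → ℝ} (hBsym : ∀ k k', B k k' = B k' k)
    (π : Fin K → ℝ) (k : Fin K) (z : OtherVertex vstar → Fin K × Bool)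
    (a : NonincidentEdge vstar → Bool) :
    sbmWeight B π (starConfigEquiv vstar K (k, z, a))
      = π k * (∏ v, vertexWeight π (B k) (z v)) *
          ∏ e : NonincidentEdge vstar,
            (if a e then B (glueLabels vstar k z e.val.val.1) (glueLabels vstar k z e.val.val.2)
             else 1 - B (glueLabels vstar k z e.val.val.1) (glueLabels vstar k z e.val.val.2)) := by
  simp only [sbmWeight, starConfigEquiv, Equiv.coe_fn_mk]
  rw [prod_glueLabels, ← (edgeEquiv vstar).prod_comp, Fintype.prod_sum_type]
  simp only [edgeEquiv, Equiv.coe_fn_mk, Sum.elim_inl, Sum.elim_inr, glueEdges_starEdge,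
    glueEdges_val, glueLabels_starEdge hBsym, vertexWeight, prod_mul_distrib]
  ring

end StarDecomposition

-- Reducible, so that `if` on it uses the same `Decidable` instance as the unfolded statement.
abbrev MisclassifiedNoTie {α : Type*} (k : α) (D N : α → ℕ) : Prop :=
  ∃ k', k' ≠ k ∧ (D k : ℝ) / N k < (D k' : ℝ) / N k'

theorem sum_misclassified_starConfigEquiv {n K : ℕ} (vstar : Fin n) {B : Fin K → Fin K → ℝ}
    (hBsym : ∀ k k', B k k' = B k' k) (π : Fin K → ℝ) (k : Fin K) :
    ∑ p : (OtherVertex vstar → Fin K × Bool) × (NonincidentEdge vstar → Bool),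
      (if MisclassifiedNoTie ((starConfigEquiv vstar K (k, p)).1 vstar)
          (Dk (starConfigEquiv vstar K (k, p)) vstar) (nk (starConfigEquiv vstar K (k, p)).1 vstar)
       then sbmWeight B π (starConfigEquiv vstar K (k, p)) else 0)
      = π k * ∑ m ∈ univ.filter (fun m : Fin K → Fin n => ∑ j, (m j).val = n - 1),
          (Nat.multinomial univ (fun j => (m j).val) : ℝ) * (∏ j, π j ^ (m j).val) *
            ∑ d ∈ univ.filter (fun d : Fin K → Fin n => ∀ j, (d j).val ≤ (m j).val),
              (∏ j, fBin (d j).val (m j).val (B k j)) *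
                (if MisclassifiedNoTie k (fun j => (d j).val) (fun j => (m j).val)
                 then 1 else 0) := by
  have hcard : Fintype.card (OtherVertex vstar) = n - 1 := by simp
  calc _ = π k * ∑ g ∈ piAntidiag univ (Fintype.card (OtherVertex vstar)),
        (Nat.multinomial univ g : ℝ) * (∏ ζ, vertexWeight π (B k) ζ ^ g ζ) *
          (if MisclassifiedNoTie k (fun j => g (j, true)) (fun j => g (j, true) + g (j, false))
           then 1 else 0) := by
        rw [← sum_prod_mul_fiberCard, mul_sum, Fintype.sum_prod_type]
        refine sum_congr rfl fun z _ => ?_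
        simp only [starConfigEquiv_fst_self, Dk_starConfigEquiv, nk_starConfigEquiv,
          sbmWeight_starConfigEquiv hBsym]
        split_ifs
        · rw [← mul_sum, sum_prod_bernoulli]
          ring
        · simp
    _ = _ := by
        rw [hcard, sum_piAntidiag_vertexWeight (Nat.sub_one_lt_of_lt vstar.isLt) π (B k)
          fun D N => if MisclassifiedNoTie k D N then 1 else 0]
        -- only the `Decidable` instances differ: over `Fin K`, `∀ j` is decided by
        -- `Nat.decidableForallFin` rather than by `Fintype.decidableForallFintype`
        congr!

theorem sbm_misclassification_probability_general
    (n K : ℕ) (B : Fin K → Fin K → ℝ) (hBsym : ∀ k k', B k k' = B k' k) (π : Fin K → ℝ)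
    (vstar : Fin n) :
    (∑ c : (Fin n → Fin K) × (EPair n → Bool),
        if ∃ k', k' ≠ c.1 vstar ∧
            (Dk c vstar (c.1 vstar) : ℝ) / (nk c.1 vstar (c.1 vstar) : ℝ)
              < (Dk c vstar k' : ℝ) / (nk c.1 vstar k' : ℝ)
        then sbmWeight B π c else 0)
      = ∑ m ∈ Finset.univ.filter (fun m : Fin K → Fin n => ∑ k, (m k).val = n - 1),
          (Nat.multinomial Finset.univ (fun k => (m k).val) : ℝ) *
            (∏ k, π k ^ (m k).val) *
            ∑ k, π k *
              ∑ d ∈ Finset.univ.filter (fun d : Fin K → Fin n => ∀ k', (d k').val ≤ (m k').val),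
                (∏ k', fBin (d k').val (m k').val (B k k')) *
                  (if ∃ k', k' ≠ k ∧
                      ((d k).val : ℝ) / ((m k).val : ℝ) < ((d k').val : ℝ) / ((m k').val : ℝ)
                   then 1 else 0) := by
  rw [← (starConfigEquiv vstar K).sum_comp, Fintype.sum_prod_type]
  refine (sum_congr rfl fun k _ => sum_misclassified_starConfigEquiv vstar hBsym π k).trans ?_
  simp only [mul_sum]
  rw [sum_comm]
  exact sum_congr rfl fun m _ => sum_congr rfl fun k _ => sum_congr rfl fun d _ => by ring

/-- Theorem 1, no-tie part (Eq. (2)): in a stochastic blockmodel `SBM([n],B,π)`, the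
probability that the classifier `γ(v*) = argmax_k D_k(v*)/n_k` misclassifies `v*` with no tie
(i.e. some class `k' ≠ Y(v*)` has strictly larger normalized degree, with the convention
`0/0 = 0`, which is Lean's division convention) equals
`Σ_{(n₁,…,n_K): Σn_k = n-1} multinomial(n-1; n₁,…,n_K) Π_k π_k^{n_k}
  Σ_k π_k P[Bin(n_k,B_kk)/n_k < max_{k'≠k} Bin(n_{k'},B_{kk'})/n_{k'}]`,
the binomials being mutually independent. -/
theorem sbm_misclassification_probability
    (n K : ℕ) (hn : 2 ≤ n) (hK : 1 ≤ K)
    (B : Fin K → Fin K → ℝ) (hB : ∀ k k', B k k' ∈ Set.Icc (0 : ℝ) 1)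
    (hBsym : ∀ k k', B k k' = B k' k)
    (π : Fin K → ℝ) (hπ : ∀ k, 0 ≤ π k) (hπ1 : ∑ k, π k = 1)
    (vstar : Fin n) :
    (∑ c : (Fin n → Fin K) × (EPair n → Bool),
        if ∃ k', k' ≠ c.1 vstar ∧
            (Dk c vstar (c.1 vstar) : ℝ) / (nk c.1 vstar (c.1 vstar) : ℝ)
              < (Dk c vstar k' : ℝ) / (nk c.1 vstar k' : ℝ)
        then sbmWeight B π c else 0)
      = ∑ m ∈ Finset.univ.filter (fun m : Fin K → Fin n => ∑ k, (m k).val = n - 1),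
          (Nat.multinomial Finset.univ (fun k => (m k).val) : ℝ) *
            (∏ k, π k ^ (m k).val) *
            ∑ k, π k *
              ∑ d ∈ Finset.univ.filter (fun d : Fin K → Fin n => ∀ k', (d k').val ≤ (m k').val),
                (∏ k', fBin (d k').val (m k').val (B k k')) *
                  (if ∃ k', k' ≠ k ∧
                      ((d k).val : ℝ) / ((m k).val : ℝ) < ((d k').val : ℝ) / ((m k').val : ℝ)
                   then 1 else 0) :=
  sbm_misclassification_probability_general n K B hBsym π vstar
end

section
/- Let 0 < b < a < 1 and let n ≥ 1. Let Y be uniform on {1,2}, and conditionally on Y = k let D₁ ~ Bin(n, B_{k1}) and D₂ ~ Bin(n, B_{k2}) be independent, where B₁₁ = B₂₂ = a and B₁₂ = B₂₁ = b. Then for all d₁, d₂ ∈ {0,…,n}: P[Y = 1 | D₁ = d₁, D₂ = d₂] > P[Y = 2 | D₁ = d₁, D₂ = d₂] if and only if d₁ > d₂, and the two posterior probabilities are equal if and only if d₁ = d₂. -/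
open MeasureTheory ProbabilityTheory

/-!
By Bayes' rule both posteriors are the joint masses divided by the same positive number, so they
compare as `fBin d₁ n a * fBin d₂ n b` against `fBin d₁ n b * fBin d₂ n a`. The binomial family
has a monotone likelihood ratio: for `b < a` the ratio
`fBin d n a / fBin d n b = (a / b) ^ d * ((1 - a) / (1 - b)) ^ (n - d)` is strictly increasing in
`d`, and this decides both comparisons.
-/

section Binomial

variable {n d d₁ d₂ : ℕ} {a b r : ℝ}

lemma fBin_pos (hd : d ≤ n) (hr₀ : 0 < r) (hr₁ : r < 1) : 0 < fBin d n r := by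
  have : 0 < (n.choose d : ℝ) := by exact_mod_cast Nat.choose_pos hd
  have : 0 < 1 - r := sub_pos.2 hr₁
  unfold fBin
  positivity

lemma fBin_div_fBin (hd : d ≤ n) (hb₀ : b ≠ 0) (hb₁ : b ≠ 1) :
    fBin d n a / fBin d n b = (a / b) ^ d * ((1 - a) / (1 - b)) ^ (n - d) := by
  have : (n.choose d : ℝ) ≠ 0 := by exact_mod_cast (Nat.choose_pos hd).ne'
  have : 1 - b ≠ 0 := sub_ne_zero.2 (Ne.symm hb₁)
  unfold fBin
  rw [div_pow, div_pow]
  field_simp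

lemma strictMonoOn_fBin_div_fBin (hb : 0 < b) (hba : b < a) (ha : a < 1) :
    StrictMonoOn (fun d ↦ fBin d n a / fBin d n b) (Set.Iic n) := by
  intro d₁ h₁ d₂ h₂ h
  simp only [Set.mem_Iic] at h₁ h₂
  dsimp only
  rw [fBin_div_fBin h₁ hb.ne' (hba.trans ha).ne, fBin_div_fBin h₂ hb.ne' (hba.trans ha).ne]
  have hb₁ : 0 < 1 - b := by linarith
  have hq₀ : 0 < (1 - a) / (1 - b) := div_pos (by linarith) hb₁
  have hq₁ : (1 - a) / (1 - b) < 1 := (div_lt_one hb₁).2 (by linarith)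
  exact mul_lt_mul'' (pow_lt_pow_right₀ ((one_lt_div hb).2 hba) h)
    (pow_lt_pow_right_of_lt_one₀ hq₀ hq₁ (by omega))
    (pow_pos (div_pos (hb.trans hba) hb) _).le (pow_pos hq₀ _).le

lemma fBin_mul_fBin_lt_iff (hb : 0 < b) (hba : b < a) (ha : a < 1)
    (h₁ : d₁ ≤ n) (h₂ : d₂ ≤ n) :
    fBin d₁ n b * fBin d₂ n a < fBin d₁ n a * fBin d₂ n b ↔ d₂ < d₁ := by
  have hb₁ : b < 1 := hba.trans ha
  rw [← (strictMonoOn_fBin_div_fBin hb hba ha).lt_iff_lt h₂ h₁,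
    div_lt_div_iff₀ (fBin_pos h₂ hb hb₁) (fBin_pos h₁ hb hb₁), mul_comm (fBin d₁ n b)]

lemma fBin_mul_fBin_eq_iff (hb : 0 < b) (hba : b < a) (ha : a < 1)
    (h₁ : d₁ ≤ n) (h₂ : d₂ ≤ n) :
    fBin d₁ n a * fBin d₂ n b = fBin d₁ n b * fBin d₂ n a ↔ d₁ = d₂ := by
  have hb₁ : b < 1 := hba.trans ha
  rw [← (strictMonoOn_fBin_div_fBin hb hba ha).eq_iff_eq h₁ h₂,
    div_eq_div_iff (fBin_pos h₁ hb hb₁).ne' (fBin_pos h₂ hb hb₁).ne',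
    mul_comm (fBin d₁ n b)]

end Binomial

section Conditioning

variable {Ω : Type*} [MeasurableSpace Ω] {μ : Measure Ω} [IsFiniteMeasure μ] {s t u : Set Ω}

lemma cond_lt_cond_iff (hs : μ s ≠ 0) (ht : MeasurableSet t) (hu : MeasurableSet u) :
    μ[t | s] < μ[u | s] ↔ μ (s ∩ t) < μ (s ∩ u) := by
  rw [cond_apply' ht, cond_apply' hu, ENNReal.mul_lt_mul_iff_right
    (ENNReal.inv_ne_zero.2 (measure_ne_top μ s)) (ENNReal.inv_ne_top.2 hs)]

lemma cond_eq_cond_iff (hs : μ s ≠ 0) (ht : MeasurableSet t) (hu : MeasurableSet u) :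
    μ[t | s] = μ[u | s] ↔ μ (s ∩ t) = μ (s ∩ u) := by
  rw [cond_apply' ht, cond_apply' hu, ENNReal.mul_right_inj
    (ENNReal.inv_ne_zero.2 (measure_ne_top μ s)) (ENNReal.inv_ne_top.2 hs)]

end Conditioning

theorem two_block_posterior_comparison_general
    {Ω : Type*} [MeasurableSpace Ω] (μ : Measure Ω) [IsProbabilityMeasure μ]
    (n : ℕ) (a b : ℝ) (hb : 0 < b) (hba : b < a) (ha : a < 1)
    (B : Fin 2 → Fin 2 → ℝ)
    (hB11 : B 0 0 = a) (hB22 : B 1 1 = a) (hB12 : B 0 1 = b) (hB21 : B 1 0 = b)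
    (Y : Ω → Fin 2) (D₁ D₂ : Ω → ℕ)
    (hY : Measurable Y)
    (hjoint : ∀ (k : Fin 2) (d₁ d₂ : ℕ),
      μ {ω | Y ω = k ∧ D₁ ω = d₁ ∧ D₂ ω = d₂}
        = ENNReal.ofReal ((1 / 2) * (fBin d₁ n (B k 0) * fBin d₂ n (B k 1)))) :
    ∀ d₁ ≤ n, ∀ d₂ ≤ n,
      ((ProbabilityTheory.cond μ {ω | D₁ ω = d₁ ∧ D₂ ω = d₂}) {ω | Y ω = 1}
          < (ProbabilityTheory.cond μ {ω | D₁ ω = d₁ ∧ D₂ ω = d₂}) {ω | Y ω = 0}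
        ↔ d₂ < d₁) ∧
      ((ProbabilityTheory.cond μ {ω | D₁ ω = d₁ ∧ D₂ ω = d₂}) {ω | Y ω = 0}
          = (ProbabilityTheory.cond μ {ω | D₁ ω = d₁ ∧ D₂ ω = d₂}) {ω | Y ω = 1}
        ↔ d₁ = d₂) := by
  intro d₁ h₁ d₂ h₂
  set s := {ω | D₁ ω = d₁ ∧ D₂ ω = d₂}
  have hclass (k : Fin 2) : MeasurableSet {ω | Y ω = k} := hY (measurableSet_singleton k)
  have hmass (k : Fin 2) : μ (s ∩ {ω | Y ω = k})
      = ENNReal.ofReal (1 / 2 * (fBin d₁ n (B k 0) * fBin d₂ n (B k 1))) := by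
    rw [← hjoint]
    congr 1
    ext ω
    simp only [s, Set.mem_inter_iff, Set.mem_ofPred_eq]
    tauto
  have hb₁ : b < 1 := hba.trans ha
  have ha₀ : 0 < a := hb.trans hba
  have hpos₀ : 0 < 1 / 2 * (fBin d₁ n a * fBin d₂ n b)  := by
    have := fBin_pos h₁ ha₀ ha; have := fBin_pos h₂ hb hb₁; positivity
  have hpos₁ : 0 < 1 / 2 * (fBin d₁ n b * fBin d₂ n a)  := by
    have := fBin_pos h₁ hb hb₁; have := fBin_pos h₂ ha₀ ha; positivity
  have hs : μ s ≠ 0 := fun h ↦ by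
    have := measure_mono_null (Set.inter_subset_left (t := {ω | Y ω = 0})) h
    rw [hmass, hB11, hB12, ENNReal.ofReal_eq_zero] at this
    exact this.not_gt hpos₀
  rw [cond_lt_cond_iff hs (hclass 1) (hclass 0), cond_eq_cond_iff hs (hclass 0) (hclass 1),
    hmass, hmass, hB11, hB12, hB21, hB22, ENNReal.ofReal_lt_ofReal_iff hpos₀,
    ENNReal.ofReal_eq_ofReal_iff hpos₀.le hpos₁.le, mul_lt_mul_iff_right₀ (by norm_num),
    mul_right_inj' (by norm_num)]
  exact ⟨fBin_mul_fBin_lt_iff hb hba ha h₁ h₂, fBin_mul_fBin_eq_iff hb hba ha h₁ h₂⟩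

/-- Bayes optimality of the simple vertex classifier in the two-block symmetric SBM:
`Y` is uniform on the two classes (`Fin 2` with `0` ≡ class 1, `1` ≡ class 2), and conditionally
on `Y = k` the block degrees `D₁ ~ Bin(n, B_{k1})` and `D₂ ~ Bin(n, B_{k2})` are independent,
where `B₁₁ = B₂₂ = a`, `B₁₂ = B₂₁ = b`, `0 < b < a < 1` (the joint hypothesis records exactly
this model). Then for all `d₁, d₂ ∈ {0,…,n}`, the posterior satisfies
`P[Y = 1 | D₁ = d₁, D₂ = d₂] > P[Y = 2 | D₁ = d₁, D₂ = d₂]` iff `d₁ > d₂`, with equality of the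
posteriors iff `d₁ = d₂`. -/
theorem two_block_posterior_comparison
    {Ω : Type*} [MeasurableSpace Ω] (μ : Measure Ω) [IsProbabilityMeasure μ]
    (n : ℕ) (hn : 1 ≤ n) (a b : ℝ) (hb : 0 < b) (hba : b < a) (ha : a < 1)
    (B : Fin 2 → Fin 2 → ℝ)
    (hB11 : B 0 0 = a) (hB22 : B 1 1 = a) (hB12 : B 0 1 = b) (hB21 : B 1 0 = b)
    (Y : Ω → Fin 2) (D₁ D₂ : Ω → ℕ)
    (hY : Measurable Y) (hD₁ : Measurable D₁) (hD₂ : Measurable D₂)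
    (hjoint : ∀ (k : Fin 2) (d₁ d₂ : ℕ),
      μ {ω | Y ω = k ∧ D₁ ω = d₁ ∧ D₂ ω = d₂}
        = ENNReal.ofReal ((1 / 2) * (fBin d₁ n (B k 0) * fBin d₂ n (B k 1)))) :
    ∀ d₁ ≤ n, ∀ d₂ ≤ n,
      ((ProbabilityTheory.cond μ {ω | D₁ ω = d₁ ∧ D₂ ω = d₂}) {ω | Y ω = 1}
          < (ProbabilityTheory.cond μ {ω | D₁ ω = d₁ ∧ D₂ ω = d₂}) {ω | Y ω = 0}
        ↔ d₂ < d₁) ∧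
      ((ProbabilityTheory.cond μ {ω | D₁ ω = d₁ ∧ D₂ ω = d₂}) {ω | Y ω = 0}
          = (ProbabilityTheory.cond μ {ω | D₁ ω = d₁ ∧ D₂ ω = d₂}) {ω | Y ω = 1}
        ↔ d₁ = d₂) :=
  two_block_posterior_comparison_general μ n a b hb hba ha B hB11 hB22 hB12 hB21 Y D₁ D₂ hY hjoint
end
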